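/- Corollary of Theorem 1 (finite-gain ℓ² stability). Let x_a : ℕ → ℝ^n, x_m : ℕ → ℝ^m, u : ℕ → ℝ be signals with x_m and u being ℓ² signals, let γ > 0 and β ≥ 0, and let T : ℝ^n × ℝ^m × ℝ → ℝ be L-Lipschitz (with respect to the Euclidean norm on the concatenated input) with T(0,0,0) = 0 and L < 1/γ. Define δu_k = T(x_{a,k}, x_{m,k}, u_k), and assume for every N ∈ ℕ the truncated bound (∑_{k=0}^N ‖x_{a,k}‖²)^{1/2} ≤ γ(∑_{k=0}^N |u_k + δu_k|²)^{1/2} + β. Then x_a is an ℓ² signal, i.e., ∑_{k=0}^∞ ‖x_{a,k}‖² < ∞. -/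

import Mathlib

/-!
Write `‖x‖_N` for the ℓ² norm of `x` truncated to `0, …, N`. Since `T(0,0,0) = 0`, the
Lipschitz bound gives `|δu_k| ≤ L (‖x_{a,k}‖ + ‖x_{m,k}‖ + |u_k|)`, so by Minkowski
`‖u + δu‖_N ≤ ‖u‖_N + L (‖x_a‖_N + ‖x_m‖_N + ‖u‖_N)`. Inserted into the gain bound this yields
`(1 - γL) ‖x_a‖_N ≤ γ ((1 + L) ‖u‖_{ℓ²} + L ‖x_m‖_{ℓ²}) + β`, and `γL < 1` makes the truncated
norms of `x_a` uniformly bounded.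
-/

open Finset

section TruncNorm

variable {ι E : Type*} [NormedAddCommGroup E]

noncomputable def truncNorm (s : Finset ι) (f : ι → E) : ℝ :=
  √(∑ k ∈ s, ‖f k‖ ^ 2)

lemma truncNorm_nonneg (s : Finset ι) (f : ι → E) : 0 ≤ truncNorm s f :=
  Real.sqrt_nonneg _

lemma truncNorm_eq_norm_toLp (s : Finset ι) (f : ι → E) :
    truncNorm s f = ‖WithLp.toLp 2 (fun k : s => f k)‖ := by
  rw [PiLp.norm_eq_of_L2, truncNorm, ← sum_coe_sort s]

lemma truncNorm_add_le (s : Finset ι) (f g : ι → E) :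
    truncNorm s (f + g) ≤ truncNorm s f + truncNorm s g := by
  simp only [truncNorm_eq_norm_toLp]
  exact norm_add_le (WithLp.toLp 2 (fun k : s => f k)) (WithLp.toLp 2 (fun k : s => g k))

lemma truncNorm_const_mul (s : Finset ι) (c : ℝ) (f : ι → ℝ) :
    truncNorm s (fun k => c * f k) = |c| * truncNorm s f := by
  simp only [truncNorm_eq_norm_toLp, ← Real.norm_eq_abs, ← norm_smul]
  rfl

lemma truncNorm_norm (s : Finset ι) (f : ι → E) :
    truncNorm s (fun k => ‖f k‖) = truncNorm s f := by
  simp only [truncNorm, norm_norm]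

lemma truncNorm_le_of_norm_le {F : Type*} [NormedAddCommGroup F] {s : Finset ι} {f : ι → E}
    {g : ι → F} (h : ∀ k ∈ s, ‖f k‖ ≤ ‖g k‖) : truncNorm s f ≤ truncNorm s g :=
  Real.sqrt_le_sqrt <| sum_le_sum fun k hk => pow_le_pow_left₀ (norm_nonneg _) (h k hk) 2

lemma truncNorm_le_sqrt_tsum {s : Finset ι} {f : ι → E} (hf : Summable fun k => ‖f k‖ ^ 2) :
    truncNorm s f ≤ √(∑' k, ‖f k‖ ^ 2) :=
  Real.sqrt_le_sqrt <| hf.sum_le_tsum s fun k _ => by positivity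

lemma summable_sq_norm_of_truncNorm_range_le {f : ℕ → E} {B : ℝ}
    (h : ∀ N, truncNorm (range (N + 1)) f ≤ B) : Summable fun k => ‖f k‖ ^ 2 := by
  refine summable_of_sum_range_le (c := B ^ 2) (fun k => by positivity) fun n => ?_
  cases n with
  | zero => simpa using sq_nonneg B
  | succ N => exact (Real.sqrt_le_left ((truncNorm_nonneg _ _).trans (h N))).1 (h N)

end TruncNorm

lemma Real.sqrt_sq_add_sq_add_sq_le {a b c : ℝ} (ha : 0 ≤ a) (hb : 0 ≤ b) (hc : 0 ≤ c) :
    √(a ^ 2 + b ^ 2 + c ^ 2) ≤ a + b + c := by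
  rw [Real.sqrt_le_left (by positivity)]
  nlinarith [mul_nonneg ha hb, mul_nonneg hb hc, mul_nonneg ha hc]

lemma abs_apply_le_of_lipschitz_of_map_zero {E F : Type*} [NormedAddCommGroup E]
    [NormedAddCommGroup F] {L : ℝ} (hL : 0 ≤ L) {T : E → F → ℝ → ℝ}
    (hT : ∀ (x x' : E) (y y' : F) (v v' : ℝ),
      |T x y v - T x' y' v'| ≤ L * √(‖x - x'‖ ^ 2 + ‖y - y'‖ ^ 2 + |v - v'| ^ 2))
    (hT0 : T 0 0 0 = 0) (x : E) (y : F) (v : ℝ) : |T x y v| ≤ L * (‖x‖ + ‖y‖ + |v|) := by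
  calc |T x y v| ≤ L * √(‖x‖ ^ 2 + ‖y‖ ^ 2 + |v| ^ 2) := by
        simpa only [hT0, sub_zero] using hT x 0 y 0 v 0
    _ ≤ L * (‖x‖ + ‖y‖ + |v|) := by
        gcongr
        exact Real.sqrt_sq_add_sq_add_sq_le (norm_nonneg x) (norm_nonneg y) (abs_nonneg v)

lemma one_sub_mul_truncNorm_le_of_gain_le {ι E F : Type*} [NormedAddCommGroup E]
    [NormedAddCommGroup F] {s : Finset ι} {xa : ι → E} {xm : ι → F} {u δu : ι → ℝ}
    {γ β L : ℝ} (hγ : 0 ≤ γ) (hL : 0 ≤ L)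
    (hδu : ∀ k, |δu k| ≤ L * (‖xa k‖ + ‖xm k‖ + |u k|))
    (hgain : truncNorm s xa ≤ γ * truncNorm s (u + δu) + β) :
    (1 - γ * L) * truncNorm s xa ≤ γ * ((1 + L) * truncNorm s u + L * truncNorm s xm) + β := by
  have hδ : truncNorm s δu ≤ L * (truncNorm s xa + truncNorm s xm + truncNorm s u) :=
    calc truncNorm s δu ≤ truncNorm s (fun k => L * (‖xa k‖ + ‖xm k‖ + |u k|)) :=
          truncNorm_le_of_norm_le fun k _ => (hδu k).trans (le_abs_self _)
      _ = L * truncNorm s ((fun k => ‖xa k‖) + (fun k => ‖xm k‖) + (fun k => ‖u k‖)) := by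
          rw [truncNorm_const_mul, abs_of_nonneg hL]
          rfl
      _ ≤ L * (truncNorm s xa + truncNorm s xm + truncNorm s u) := by
          grw [truncNorm_add_le, truncNorm_add_le]
          simp only [truncNorm_norm, le_refl]
  have hsum : γ * truncNorm s (u + δu) ≤ γ * (truncNorm s u + truncNorm s δu) := by
    grw [truncNorm_add_le]
  have hγδ := mul_le_mul_of_nonneg_left hδ hγ
  linarith

theorem lipnet_mrac_finite_gain_l2_stable_general {n m : ℕ}
    (xa : ℕ → EuclideanSpace ℝ (Fin n)) (xm : ℕ → EuclideanSpace ℝ (Fin m)) (u : ℕ → ℝ)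
    (hxm : Summable fun k => ‖xm k‖ ^ 2)
    (hu : Summable fun k => ‖u k‖ ^ 2)
    (γ β L : ℝ) (hγ : 0 < γ) (hL0 : 0 ≤ L)
    (T : EuclideanSpace ℝ (Fin n) → EuclideanSpace ℝ (Fin m) → ℝ → ℝ)
    (hT : ∀ (x x' : EuclideanSpace ℝ (Fin n)) (y y' : EuclideanSpace ℝ (Fin m)) (v v' : ℝ),
      |T x y v - T x' y' v'| ≤ L * Real.sqrt (‖x - x'‖ ^ 2 + ‖y - y'‖ ^ 2 + |v - v'| ^ 2))
    (hT0 : T 0 0 0 = 0)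
    (hLγ : L < 1 / γ)
    (δu : ℕ → ℝ) (hδu : ∀ k, δu k = T (xa k) (xm k) (u k))
    (hgain : ∀ N : ℕ,
      Real.sqrt (∑ k ∈ Finset.range (N + 1), ‖xa k‖ ^ 2) ≤
        γ * Real.sqrt (∑ k ∈ Finset.range (N + 1), |u k + δu k| ^ 2) + β) :
    Summable fun k => ‖xa k‖ ^ 2 := by
  have hγL : 0 < 1 - γ * L := by
    rw [lt_div_iff₀ hγ] at hLγ
    linarith
  have hδ k : |δu k| ≤ L * (‖xa k‖ + ‖xm k‖ + |u k|) :=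
    hδu k ▸ abs_apply_le_of_lipschitz_of_map_zero hL0 hT hT0 _ _ _
  refine summable_sq_norm_of_truncNorm_range_le
    (B := (γ * ((1 + L) * √(∑' k, ‖u k‖ ^ 2) + L * √(∑' k, ‖xm k‖ ^ 2)) + β) / (1 - γ * L))
    fun N => ?_
  rw [le_div_iff₀' hγL]
  calc (1 - γ * L) * truncNorm (range (N + 1)) xa
      ≤ γ * ((1 + L) * truncNorm (range (N + 1)) u + L * truncNorm (range (N + 1)) xm) + β :=
        one_sub_mul_truncNorm_le_of_gain_le hγ.le hL0 hδ (hgain N)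
    _ ≤ γ * ((1 + L) * √(∑' k, ‖u k‖ ^ 2) + L * √(∑' k, ‖xm k‖ ^ 2)) + β := by
        grw [truncNorm_le_sqrt_tsum hu, truncNorm_le_sqrt_tsum hxm]

/-- **Corollary of Theorem 1 (finite-gain ℓ² stability).**
If `x_m` and `u` are ℓ² signals, `T` is `L`-Lipschitz (w.r.t. the Euclidean norm on the
concatenated input) with `T(0,0,0) = 0` and `L < 1/γ`, `δu_k = T(x_{a,k}, x_{m,k}, u_k)`,
and the truncated gain bound
`(∑_{k=0}^N ‖x_{a,k}‖²)^{1/2} ≤ γ(∑_{k=0}^N |u_k + δu_k|²)^{1/2} + β` holds for every `N`,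
then `x_a` is an ℓ² signal. -/
theorem lipnet_mrac_finite_gain_l2_stable {n m : ℕ}
    (xa : ℕ → EuclideanSpace ℝ (Fin n)) (xm : ℕ → EuclideanSpace ℝ (Fin m)) (u : ℕ → ℝ)
    (hxm : Summable fun k => ‖xm k‖ ^ 2)
    (hu : Summable fun k => ‖u k‖ ^ 2)
    (γ β L : ℝ) (hγ : 0 < γ) (hβ : 0 ≤ β) (hL0 : 0 ≤ L)
    (T : EuclideanSpace ℝ (Fin n) → EuclideanSpace ℝ (Fin m) → ℝ → ℝ)
    (hT : ∀ (x x' : EuclideanSpace ℝ (Fin n)) (y y' : EuclideanSpace ℝ (Fin m)) (v v' : ℝ),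
      |T x y v - T x' y' v'| ≤ L * Real.sqrt (‖x - x'‖ ^ 2 + ‖y - y'‖ ^ 2 + |v - v'| ^ 2))
    (hT0 : T 0 0 0 = 0)
    (hLγ : L < 1 / γ)
    (δu : ℕ → ℝ) (hδu : ∀ k, δu k = T (xa k) (xm k) (u k))
    (hgain : ∀ N : ℕ,
      Real.sqrt (∑ k ∈ Finset.range (N + 1), ‖xa k‖ ^ 2) ≤
        γ * Real.sqrt (∑ k ∈ Finset.range (N + 1), |u k + δu k| ^ 2) + β) :
    Summable fun k => ‖xa k‖ ^ 2 :=
  lipnet_mrac_finite_gain_l2_stable_general xa xm u hxm hu γ β L hγ hL0 T hT hT0 hLγ δu hδu hgain
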